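/- arXiv:2207.08459 — 2 statements merged into one kernel-verified Lean document; each statement's English description precedes it below -/
import Mathlib

section
/- Let ((L,≤_L),(P_n)_{n∈ℕ}) be a well-structured x–y grain line in a graph G, and let v ∈ L with x <_L v <_L y, where d is the P-depth of v. Then v together with the (finitely many) edges of ⋃P of P-depth at most d separates [x,v)_L from (v,y]_L in ⋃P; that is, every path in ⋃P from a vertex of [x,v)_L to a vertex of (v,y]_L either contains v or contains an edge of P-depth at most d. -/
open SimpleGraph

/-- Two walks (with arbitrary endpoints) are edge-disjoint. -/
def EdgeDisjW {V : Type*} {G : SimpleGraph V} {a b c d : V}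
    (p : G.Walk a b) (q : G.Walk c d) : Prop :=
  ∀ e, e ∈ p.edges → e ∉ q.edges

/-- A graph is infinitely edge-connected: it has at least two vertices and
between any two distinct vertices there are infinitely many pairwise
edge-disjoint paths. -/
def InfEdgeConn {V : Type*} (G : SimpleGraph V) : Prop :=
  (∃ u v : V, u ≠ v) ∧
    ∀ u v : V, u ≠ v →
      ∃ P : ℕ → G.Walk u v,
        (∀ n, (P n).IsPath) ∧ ∀ m n, m ≠ n → EdgeDisjW (P m) (P n)

/-- Infinite edge-connectivity of the subgraph spanned by a vertex set `S`
(used for graphs of the form "union of a family of paths", whose abstract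
vertex set is `S`). -/
def InfEdgeConnOn {V : Type*} (G : SimpleGraph V) (S : Set V) : Prop :=
  (∃ u ∈ S, ∃ v ∈ S, u ≠ v) ∧
    ∀ u ∈ S, ∀ v ∈ S, u ≠ v →
      ∃ P : ℕ → G.Walk u v,
        (∀ n, (P n).IsPath) ∧ ∀ m n, m ≠ n → EdgeDisjW (P m) (P n)

/-- `α` together with the family of paths `P` (one for each edge of `H`)
is a strong immersion of `H` in `G`. -/
def IsStrongImmersion {VH VG : Type*} (H : SimpleGraph VH) (G : SimpleGraph VG)
    (α : VH → VG) (P : ∀ ⦃u v : VH⦄, H.Adj u v → G.Walk (α u) (α v)) : Prop :=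
  Function.Injective α ∧
  (∀ ⦃u v : VH⦄ (h : H.Adj u v), (P h).IsPath) ∧
  (∀ ⦃u v u' v' : VH⦄ (h : H.Adj u v) (h' : H.Adj u' v'),
      s(u, v) ≠ s(u', v') → EdgeDisjW (P h) (P h')) ∧
  (∀ ⦃u v : VH⦄ (h : H.Adj u v), ∀ w ∈ (P h).support,
      (∃ z, α z = w) → w = α u ∨ w = α v)

/-- `H` is strongly immersed in `G`. -/
def StronglyImmersed {VH VG : Type*} (H : SimpleGraph VH) (G : SimpleGraph VG) : Prop :=
  ∃ α P, IsStrongImmersion H G α P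

/-- `β` together with the family of paths `P` witnesses that `G` contains
a subdivision of `H`: the paths are internally disjoint and have no internal
vertex among the branch vertices. -/
def IsSubdivision {VH VG : Type*} (H : SimpleGraph VH) (G : SimpleGraph VG)
    (β : VH → VG) (P : ∀ ⦃u v : VH⦄, H.Adj u v → G.Walk (β u) (β v)) : Prop :=
  Function.Injective β ∧
  (∀ ⦃u v : VH⦄ (h : H.Adj u v), (P h).IsPath) ∧
  (∀ ⦃u v u' v' : VH⦄ (h : H.Adj u v) (h' : H.Adj u' v'),
      s(u, v) ≠ s(u', v') → ∀ w, w ∈ (P h).support → w ∈ (P h').support →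
        (w = β u ∨ w = β v) ∧ (w = β u' ∨ w = β v')) ∧
  (∀ ⦃u v : VH⦄ (h : H.Adj u v), ∀ w ∈ (P h).support,
      (∃ z, β z = w) → w = β u ∨ w = β v)

/-- `H` is a topological minor of `G`. -/
def TopMinor {VH VG : Type*} (H : SimpleGraph VH) (G : SimpleGraph VG) : Prop :=
  ∃ β P, IsSubdivision H G β P

/-- The dyadic rationals of the unit interval: the vertices of the halved
Farey graph. -/
def DyadicSet : Set ℚ := {q | ∃ n k : ℕ, k ≤ 2 ^ n ∧ q = (k : ℚ) / 2 ^ n}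

/-- The halved Farey graph: two dyadic rationals of `[0,1]` are adjacent iff
they are of the form `k/2^n` and `(k+1)/2^n`. -/
def halvedFarey : SimpleGraph DyadicSet where
  Adj a b := a ≠ b ∧ ∃ n k : ℕ, k + 1 ≤ 2 ^ n ∧
    ((a.1 = (k : ℚ) / 2 ^ n ∧ b.1 = ((k : ℚ) + 1) / 2 ^ n) ∨
     (b.1 = (k : ℚ) / 2 ^ n ∧ a.1 = ((k : ℚ) + 1) / 2 ^ n))
  symm := by
    constructor
    rintro a b ⟨hne, n, k, hk, h⟩
    exact ⟨hne.symm, n, k, hk, h.symm⟩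
  loopless := by constructor; rintro a ⟨hne, -⟩; exact hne rfl

/-- Adjacency in the Farey graph on `ℚ ∪ {∞}` (`none` is `∞ = ±1/0`). -/
def fareyAdj : Option ℚ → Option ℚ → Prop
  | some q, some r =>
      q.num * (r.den : ℤ) - r.num * (q.den : ℤ) = 1 ∨
      q.num * (r.den : ℤ) - r.num * (q.den : ℤ) = -1
  | some q, none => q.den = 1
  | none, some r => r.den = 1
  | none, none => False

/-- The Farey graph. -/
def fareyGraph : SimpleGraph (Option ℚ) where
  Adj := fareyAdj
  symm := by
    constructor
    rintro (_ | q) (_ | r) h <;> simp only [fareyAdj] at * <;> omega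
  loopless := by
    constructor
    rintro (_ | q) h <;> simp only [fareyAdj] at h <;> omega
/-- `u` occurs strictly before `v` on the list `l`. -/
def Before {V : Type*} (l : List V) (u v : V) : Prop := List.Sublist [u, v] l

/-- `l` is the (consecutive) portion of the list `R` starting at `u` and
ending at `v`. -/
def IsPortion {V : Type*} (R : List V) (u v : V) (l : List V) : Prop :=
  (∃ pre post, R = pre ++ l ++ post) ∧ l.head? = some u ∧ l.getLast? = some v

/-- The union of a family of walks, as a graph on the ambient vertex set
(its abstract vertex set is `walkSupp P`). -/
def walkUnion {V : Type*} {G : SimpleGraph V} {x y : V}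
    (P : ℕ → G.Walk x y) : SimpleGraph V where
  Adj u v := ∃ n, s(u, v) ∈ (P n).edges
  symm := by
    constructor
    rintro u v ⟨n, h⟩
    exact ⟨n, by rwa [Sym2.eq_swap]⟩
  loopless := by
    constructor
    rintro v ⟨n, h⟩
    exact G.loopless.irrefl v ((P n).edges_subset_edgeSet h)

/-- The vertices appearing on some walk of the family. -/
def walkSupp {V : Type*} {G : SimpleGraph V} {x y : V}
    (P : ℕ → G.Walk x y) : Set V := {v | ∃ n, v ∈ (P n).support}

/-- An `x`–`y` grain line in `G`. -/
structure GrainLine {V : Type*} (G : SimpleGraph V) (x y : V) where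
  ne_xy : x ≠ y
  /-- The limit set `L`. -/
  L : Set V
  /-- The linear order `≤_L` on `L`. -/
  le : V → V → Prop
  /-- The pairwise edge-disjoint `x`–`y` paths. -/
  P : ℕ → G.Walk x y
  isPath : ∀ n, (P n).IsPath
  edgeDisj : ∀ m n, m ≠ n → EdgeDisjW (P m) (P n)
  le_refl : ∀ v ∈ L, le v v
  le_trans : ∀ u ∈ L, ∀ v ∈ L, ∀ w ∈ L, le u v → le v w → le u w
  le_antisymm : ∀ u ∈ L, ∀ v ∈ L, le u v → le v u → u = v
  le_total : ∀ u ∈ L, ∀ v ∈ L, le u v ∨ le v u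
  x_mem : x ∈ L
  y_mem : y ∈ L
  x_min : ∀ v ∈ L, le x v
  y_max : ∀ v ∈ L, le v y
  /-- (GL1): `L` is the set of vertices lying on a final segment of the paths. -/
  gl1 : ∀ v : V, v ∈ L ↔ ∃ N : ℕ, ∀ n : ℕ, v ∈ (P n).support ↔ N ≤ n
  /-- (GL2): a vertex of some path not in `L` lies on no other path. -/
  gl2 : ∀ n : ℕ, ∀ v ∈ (P n).support, v ∉ L → ∀ m : ℕ, m ≠ n → v ∉ (P m).support
  /-- (GL3): for `n ≥ 1`, the path `P n` traverses the vertices of `L_{<n}`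
  in the order given by `≤_L`. -/
  gl3 : ∀ n : ℕ, 1 ≤ n → ∀ u v : V, u ∈ L → v ∈ L →
      (∃ m < n, u ∈ (P m).support) → (∃ m < n, v ∈ (P m).support) →
      u ≠ v → (le u v ↔ Before (P n).support u v)

namespace GrainLine

variable {V : Type*} {G : SimpleGraph V} {x y : V}

/-- The graph `⋃𝒫` defined by the grain line. -/
def union (gl : GrainLine G x y) : SimpleGraph V := walkUnion gl.P

/-- The vertex set of `⋃𝒫`. -/
def supp (gl : GrainLine G x y) : Set V := walkSupp gl.P

/-- The set `L_{<n}` of vertices of `L` of depth `< n`. -/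
def Llt (gl : GrainLine G x y) (n : ℕ) : Set V :=
  {v | v ∈ gl.L ∧ ∃ m < n, v ∈ (gl.P m).support}

/-- The `𝒫`-depth of a vertex. -/
noncomputable def vDepth (gl : GrainLine G x y) (v : V) : ℕ :=
  sInf {n | v ∈ (gl.P n).support}

/-- The `𝒫`-depth of an edge. -/
noncomputable def eDepth (gl : GrainLine G x y) (e : Sym2 V) : ℕ :=
  sInf {n | e ∈ (gl.P n).edges}

/-- `u` and `v` are the ends of a `𝒫`-segment of depth `d`: both lie in
`L_{<d}` and `v` is the successor of `u` in `(L_{<d}, ≤_L)`. -/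
def IsSegEnds (gl : GrainLine G x y) (d : ℕ) (u v : V) : Prop :=
  u ∈ gl.Llt d ∧ v ∈ gl.Llt d ∧ u ≠ v ∧ gl.le u v ∧
    ∀ z ∈ gl.Llt d, gl.le u z → gl.le z v → z = u ∨ z = v

/-- The grain line is well-structured: every vertex of a `𝒫`-segment
`u P_d v` lying in `L` belongs to the interval `[u,v]` of `(L, ≤_L)`. -/
def WellStructured (gl : GrainLine G x y) : Prop :=
  ∀ d u v, gl.IsSegEnds d u v →
    ∀ w ∈ gl.L, (w = u ∨ w = v ∨ List.Sublist [u, w, v] (gl.P d).support) →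
      gl.le u w ∧ gl.le w v

/-- The grain line is free: the graph `⋃𝒫` it defines is infinitely
edge-connected. -/
def Free (gl : GrainLine G x y) : Prop := InfEdgeConnOn gl.union gl.supp

/-- The grain line is wildly presented. -/
def WildlyPresented (gl : GrainLine G x y) : Prop :=
  ∀ n : ℕ, 1 ≤ n → ∀ u v : V, u ∈ gl.Llt n → v ∈ gl.Llt n → u ≠ v → gl.le u v →
    ∃ w ∈ gl.L, w ≠ u ∧ w ≠ v ∧ gl.le u w ∧ gl.le w v ∧
      List.Sublist [u, w, v] (gl.P n).support

end GrainLine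

/-- `G` is a generalised halved Farey graph: it is defined by a grain line
satisfying (GL2') and (GL3'). -/
def IsGenHalvedFarey {V : Type*} (G : SimpleGraph V) : Prop :=
  ∃ (x y : V) (gl : GrainLine G x y),
    (∀ v : V, v ∈ gl.L) ∧
    (∀ u v : V, gl.le u v ↔ (u = v ∨ ∃ n, Before (gl.P n).support u v)) ∧
    (∀ u v : V, G.Adj u v ↔ ∃ n, s(u, v) ∈ (gl.P n).edges)
/-- `{A, B}` is a compound-separation of `G`. -/
def IsCompoundSep {V : Type*} (G : SimpleGraph V) (A B : Set V) : Prop :=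
  A ∪ B = Set.univ ∧ (A \ B).Nonempty ∧ (B \ A).Nonempty ∧ (A ∩ B).Finite ∧
    {p : V × V | G.Adj p.1 p.2 ∧ p.1 ∈ A \ B ∧ p.2 ∈ B \ A}.Finite

/-- The separation `{A, B}` separates the vertices `u` and `v`. -/
def SepPair {V : Type*} (A B : Set V) (u v : V) : Prop :=
  (u ∈ A \ B ∧ v ∈ B \ A) ∨ (u ∈ B \ A ∧ v ∈ A \ B)

/-- The compound-separation `{A, B}` separates `u` and `v` minimally. -/
def MinSeps {V : Type*} (G : SimpleGraph V) (A B : Set V) (u v : V) : Prop :=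
  SepPair A B u v ∧
    ∀ C D : Set V, IsCompoundSep G C D → C ∩ D ⊂ A ∩ B → ¬ SepPair C D u v

/-- `{A, B}` is a unitary compound-separation of `G` with separator `w`. -/
def IsUnitaryCSep {V : Type*} (G : SimpleGraph V) (A B : Set V) (w : V) : Prop :=
  IsCompoundSep G A B ∧ A ∩ B = {w}

/-- `w` is a compound-cutvertex of `G`. -/
def IsCompoundCutvertex {V : Type*} (G : SimpleGraph V) (w : V) : Prop :=
  ∃ A B, IsUnitaryCSep G A B w

/-- `G` is `k`-compound-connected: no compound-separation of order `< k`
separates any two vertices. -/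
def kCompConn {V : Type*} (G : SimpleGraph V) (k : ℕ) : Prop :=
  ∀ A B : Set V, IsCompoundSep G A B → (A ∩ B).ncard < k →
    ∀ u v : V, ¬ SepPair A B u v

/-- `u` and `v` cannot be separated by deleting finitely many edges. -/
def FinEdgeConn {V : Type*} (G : SimpleGraph V) (u v : V) : Prop :=
  ∀ F : Set (Sym2 V), F.Finite → (G.deleteEdges F).Reachable u v

/-- `G` is a Π-graph: it is infinitely edge-connected but has no two vertices
linked by infinitely many pairwise internally disjoint paths. -/
def PiGraph {V : Type*} (G : SimpleGraph V) : Prop :=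
  InfEdgeConn G ∧
    ∀ u v : V, u ≠ v →
      ¬ ∃ P : ℕ → G.Walk u v, (∀ n, (P n).IsPath) ∧
          ∀ m n, m ≠ n → ∀ w ∈ (P m).support, w ∈ (P n).support → w = u ∨ w = v

/-- `H` is a `k`-bounded minor of `G`: there are disjoint nonempty connected
branch sets of size `< k`. -/
def IsBddMinor {VH VG : Type*} (H : SimpleGraph VH) (G : SimpleGraph VG) (k : ℕ) : Prop :=
  ∃ B : VH → Set VG,
    (∀ h, (B h).Nonempty) ∧
    (∀ h, (B h).Finite ∧ (B h).ncard < k) ∧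
    (∀ h h', h ≠ h' → Disjoint (B h) (B h')) ∧
    (∀ h, (G.induce (B h)).Connected) ∧
    (∀ h h', H.Adj h h' → ∃ a ∈ B h, ∃ b ∈ B h', G.Adj a b)

/-- The order on oriented separations: `(A,B) ≤ (C,D)` iff `A ⊆ C` and `D ⊆ B`. -/
def osLE {V : Type*} (s t : Set V × Set V) : Prop := s.1 ⊆ t.1 ∧ t.2 ⊆ s.2

/-- The reverse orientation of an oriented separation. -/
def swapSep {V : Type*} (s : Set V × Set V) : Set V × Set V := (s.2, s.1)

/-- Two (unordered) separations, given by representative orientations, are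
nested: they have comparable orientations. -/
def NestedSep {V : Type*} (s t : Set V × Set V) : Prop :=
  osLE s t ∨ osLE t s ∨ osLE s (swapSep t) ∨ osLE (swapSep s) t

/-- `σ` is an orientation of the set `N` of separations which is a star. -/
def IsStarOrientation {V : Type*} (N σ : Set (Set V × Set V)) : Prop :=
  (∀ s ∈ N, s ∈ σ ∨ swapSep s ∈ σ) ∧
  (∀ s ∈ N, ¬ (s ∈ σ ∧ swapSep s ∈ σ)) ∧
  (∀ t ∈ σ, t ∈ N ∨ swapSep t ∈ N) ∧
  (∀ s ∈ σ, ∀ t ∈ σ, s ≠ t → osLE s (swapSep t))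

/-- The set `N` of unitary compound-separations is faithful to the
compound-cutvertex `w` in `G`. -/
def FaithfulToVert {V : Type*} (G : SimpleGraph V) (N : Set (Set V × Set V)) (w : V) : Prop :=
  (∃ σ, IsStarOrientation {s ∈ N | s.1 ∩ s.2 = {w}} σ) ∧
  ∀ u v : V, (∃ A B, IsUnitaryCSep G A B w ∧ SepPair A B u v) →
    ∃ s ∈ N, s.1 ∩ s.2 = {w} ∧ SepPair s.1 s.2 u v

/-- The set `N` of unitary compound-separations is faithful to `G`. -/
def FaithfulSet {V : Type*} (G : SimpleGraph V) (N : Set (Set V × Set V)) : Prop :=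
  ∀ w : V, IsCompoundCutvertex G w → FaithfulToVert G N w

/-- A set of graphs is typical for the class of infinitely edge-connected
graphs with regard to the topological minor relation. -/
def TypicalTopMinor (𝓗 : Set (Σ V : Type, SimpleGraph V)) : Prop :=
  ∀ (W : Type) (G : SimpleGraph W), InfEdgeConn G → ∃ H ∈ 𝓗, TopMinor H.2 G

/-!
Let `v ∈ L` have depth `d`, so that `v` lies on every `P n` with `n ≥ d`. In a well-structured
grain line each such path with `n > d` traverses its vertices of `L` on the side of `v` on which
`≤_L` puts them. Call `c` a vertex preceding `v` beyond `d` if `c` comes before `v` on every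
`P n`, `n > d`, through `c`. Every `a <_L v` has this property, and it passes along every edge
`ce` of depth `m > d` with `e ≠ v`: the edge is a step of `P m`, so `e` precedes `v` on `P m`, and
then either `e ∈ L`, where the paths follow `≤_L`, or `P m` is the only path through `e`
by (GL2). Hence a path avoiding `v` and all edges of depth `≤ d` cannot lead from `a` to any
`b >_L v`.
-/

namespace List

variable {α : Type*} {l A M R D : List α} {a b c e u u' z : α}

theorem before_left_mem (h : Before l a b) : a ∈ l :=
  Sublist.subset h (mem_cons_self ..)

theorem before_append_cons_of_mem (hz : z ∈ R) : Before (A ++ u :: R) u z :=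
  (cons_sublist_cons.2 (singleton_sublist.2 hz)).trans (sublist_append_right A _)

theorem before_reverse_iff : Before l.reverse a b ↔ Before l b a := by
  rw [Before, Before, ← reverse_sublist, reverse_reverse]
  rfl

theorem Nodup.before_append_cons_iff (hl : (A ++ u :: R).Nodup) :
    Before (A ++ u :: R) u z ↔ z ∈ R := by
  refine ⟨fun h => ?_, before_append_cons_of_mem⟩
  induction A with
  | nil =>
    rw [nil_append, nodup_cons] at hl
    rcases sublist_cons_iff.1 h with h | ⟨r, hr, h⟩
    · exact absurd (Sublist.subset h (mem_cons_self ..)) hl.1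
    · cases hr
      exact singleton_sublist.1 h
  | cons a A ih =>
    rw [cons_append, nodup_cons] at hl
    rcases sublist_cons_iff.1 h with h | ⟨r, hr, h⟩
    · exact ih hl.2 h
    · cases hr
      exact absurd (mem_append_right A (mem_cons_self ..)) hl.1

theorem Nodup.before_append_cons_iff' (hl : (R ++ u :: D).Nodup) :
    Before (R ++ u :: D) z u ↔ z ∈ R := by
  have hrev : (R ++ u :: D).reverse = D.reverse ++ u :: R.reverse := by simp
  have hl' : (D.reverse ++ u :: R.reverse).Nodup := hrev ▸ nodup_reverse.2 hl
  rw [← before_reverse_iff, hrev, hl'.before_append_cons_iff, mem_reverse]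

theorem Nodup.before_trans (hl : l.Nodup) (hab : Before l a b) (hbc : Before l b c) :
    Before l a c := by
  obtain ⟨A, R, rfl⟩ := append_of_mem (before_left_mem hab)
  obtain ⟨B, S, rfl⟩ := append_of_mem (hl.before_append_cons_iff.1 hab)
  have hsplit : A ++ a :: (B ++ b :: S) = (A ++ a :: B) ++ b :: S := by simp
  rw [hsplit] at hl hbc
  exact before_append_cons_of_mem (mem_append_right B (mem_cons_of_mem b
    (hl.before_append_cons_iff.1 hbc)))

theorem Nodup.not_before_of_before (hl : l.Nodup) (hab : Before l a b) : ¬ Before l b a :=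
  fun hba => nodup_iff_sublist.1 hl a (hl.before_trans hab hba)

theorem Nodup.before_of_infix (hl : l.Nodup) (hce : [c, e] <:+: l) (hcv : Before l c z)
    (hez : e ≠ z) : Before l e z := by
  obtain ⟨s, t, rfl⟩ := hce
  have hsplit : s ++ [c, e] ++ t = s ++ c :: (e :: t) := by simp
  rw [hsplit] at hl hcv ⊢
  have hzt : z ∈ t := (mem_cons.1 (hl.before_append_cons_iff.1 hcv)).resolve_left hez.symm
  have hsplit' : s ++ c :: (e :: t) = (s ++ [c]) ++ e :: t := by simp
  rw [hsplit']
  exact before_append_cons_of_mem hzt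

theorem Nodup.mem_of_before_of_before (hl : (A ++ u :: (M ++ u' :: D)).Nodup)
    (hz₁ : Before (A ++ u :: (M ++ u' :: D)) u z)
    (hz₂ : Before (A ++ u :: (M ++ u' :: D)) z u') : z ∈ M := by
  have hsplit : A ++ u :: (M ++ u' :: D) = (A ++ u :: M) ++ u' :: D := by simp
  rw [hsplit] at hz₂
  have hleft : z ∈ A ++ u :: M := (hsplit ▸ hl).before_append_cons_iff'.1 hz₂
  rcases mem_append.1 (hl.before_append_cons_iff.1 hz₁) with hM | hright
  · exact hM
  · exact absurd rfl ((nodup_append.1 (hsplit ▸ hl)).2.2 z hleft z hright)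

theorem exists_eq_append_cons_first (p : α → Prop) (h : ∃ a ∈ l, p a) :
    ∃ A u R, l = A ++ u :: R ∧ p u ∧ ∀ z ∈ A, ¬ p z := by
  classical
  obtain ⟨u, hu⟩ := Option.isSome_iff_exists.1 (find?_isSome.2 (by simpa using h) :
    (l.find? (fun a => decide (p a))).isSome)
  obtain ⟨hpu, A, R, rfl, hA⟩ := find?_eq_some_iff_append.1 hu
  exact ⟨A, u, R, rfl, by simpa using hpu, fun z hz => by simpa using hA z hz⟩

theorem exists_eq_append_cons_last (p : α → Prop) (h : ∃ a ∈ l, p a) :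
    ∃ A u R, l = A ++ u :: R ∧ p u ∧ ∀ z ∈ R, ¬ p z := by
  obtain ⟨R, u, A, hl, hpu, hR⟩ :=
    exists_eq_append_cons_first (l := l.reverse) p (by simpa using h)
  exact ⟨A.reverse, u, R.reverse, by simpa using congrArg reverse hl, hpu,
    fun z hz => hR z (mem_reverse.1 hz)⟩

end List

namespace SimpleGraph.Walk

variable {V : Type*} {G : SimpleGraph V} {x y w : V} {s t : List V}

theorem start_mem_of_support_eq (p : G.Walk x y) (h : p.support = s ++ w :: t) (hw : w ≠ x) :
    x ∈ s := by
  rw [← p.cons_tail_support] at h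
  cases s with
  | nil => exact absurd (List.cons.inj h).1.symm hw
  | cons a s => exact (List.cons.inj h).1 ▸ List.mem_cons_self ..

theorem end_mem_of_support_eq (p : G.Walk x y) (h : p.support = s ++ w :: t) (hw : w ≠ y) :
    y ∈ t := by
  have hrev : p.reverse.support = t.reverse ++ w :: s.reverse := by simp [h]
  simpa using p.reverse.start_mem_of_support_eq hrev hw

end SimpleGraph.Walk

namespace GrainLine

variable {V : Type*} {G : SimpleGraph V} {x y : V} (gl : GrainLine G x y)

theorem mem_support_vDepth {v : V} (hv : v ∈ gl.L) : v ∈ (gl.P (gl.vDepth v)).support := by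
  obtain ⟨N, hN⟩ := (gl.gl1 v).1 hv
  exact Nat.sInf_mem (s := {n | v ∈ (gl.P n).support}) ⟨N, (hN N).2 le_rfl⟩

theorem mem_edges_eDepth {c e : V} (h : gl.union.Adj c e) :
    s(c, e) ∈ (gl.P (gl.eDepth s(c, e))).edges :=
  Nat.sInf_mem h

theorem x_mem_Llt {n : ℕ} (hn : 0 < n) : x ∈ gl.Llt n :=
  ⟨gl.x_mem, 0, hn, (gl.P 0).start_mem_support⟩

theorem y_mem_Llt {n : ℕ} (hn : 0 < n) : y ∈ gl.Llt n :=
  ⟨gl.y_mem, 0, hn, (gl.P 0).end_mem_support⟩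

variable {gl}

theorem pos_of_mem_Llt {n : ℕ} {v : V} (hv : v ∈ gl.Llt n) : 0 < n := by
  obtain ⟨-, m, hm, -⟩ := hv
  omega

theorem le_iff_before_of_mem_Llt {n : ℕ} {u v : V} (hu : u ∈ gl.Llt n) (hv : v ∈ gl.Llt n)
    (huv : u ≠ v) : gl.le u v ↔ Before (gl.P n).support u v :=
  gl.gl3 n (pos_of_mem_Llt hu) u v hu.1 hv.1 hu.2 hv.2 huv

theorem exists_isSegEnds_around {n : ℕ} {w : V} (hn : 0 < n) (hw : w ∈ (gl.P n).support)
    (hwn : w ∉ gl.Llt n) :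
    ∃ u u', gl.IsSegEnds n u u' ∧ List.Sublist [u, w, u'] (gl.P n).support := by
  obtain ⟨s, t, hst⟩ := List.append_of_mem hw
  have hxs := (gl.P n).start_mem_of_support_eq hst (ne_of_mem_of_not_mem (gl.x_mem_Llt hn) hwn).symm
  have hyt := (gl.P n).end_mem_of_support_eq hst (ne_of_mem_of_not_mem (gl.y_mem_Llt hn) hwn).symm
  obtain ⟨A, u, B, rfl, hu, hB⟩ :=
    List.exists_eq_append_cons_last (· ∈ gl.Llt n) ⟨x, hxs, gl.x_mem_Llt hn⟩
  obtain ⟨C, u', D, rfl, hu', hC⟩ :=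
    List.exists_eq_append_cons_first (· ∈ gl.Llt n) ⟨y, hyt, gl.y_mem_Llt hn⟩
  have hsplit : (gl.P n).support = A ++ u :: ((B ++ w :: C) ++ u' :: D) := by rw [hst]; simp
  have hnd : (A ++ u :: ((B ++ w :: C) ++ u' :: D)).Nodup := hsplit ▸ (gl.isPath n).support_nodup
  have huu' : Before (gl.P n).support u u' := by
    rw [hsplit]; exact List.before_append_cons_of_mem (by simp)
  have hne : u ≠ u' := by
    rintro rfl
    exact List.nodup_iff_sublist.1 (hsplit ▸ hnd) u huu'
  refine ⟨u, u', ⟨hu, hu', hne, (le_iff_before_of_mem_Llt hu hu' hne).2 huu', ?_⟩, ?_⟩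
  · intro z hz huz hzu'
    by_contra! hz'
    have h₁ := (le_iff_before_of_mem_Llt hu hz hz'.1.symm).1 huz
    have h₂ := (le_iff_before_of_mem_Llt hz hu' hz'.2).1 hzu'
    rw [hsplit] at h₁ h₂
    rcases List.mem_append.1 (hnd.mem_of_before_of_before h₁ h₂) with hzB | hzC
    · exact hB z hzB hz
    · rcases List.mem_cons.1 hzC with rfl | hzC
      · exact hwn hz
      · exact hC z hzC hz
  · rw [hsplit]
    simp

/- A vertex of `L` that is new on `P n` lies inside a `𝒫`-segment of depth `n`, and
well-structuredness puts it into the matching interval of `L_{<n}`. -/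
theorem le_iff_before (hws : gl.WellStructured) {n : ℕ} {v w : V} (hv : v ∈ gl.Llt n)
    (hw : w ∈ gl.L) (hwn : w ∈ (gl.P n).support) (hwv : w ≠ v) :
    gl.le w v ↔ Before (gl.P n).support w v := by
  by_cases hwL : w ∈ gl.Llt n
  · exact le_iff_before_of_mem_Llt hwL hv hwv
  obtain ⟨u, u', hseg, htriple⟩ := exists_isSegEnds_around (pos_of_mem_Llt hv) hwn hwL
  obtain ⟨huw, hwu'⟩ := hws n u u' hseg w hw (Or.inr (Or.inr htriple))
  obtain ⟨hu, hu', -, -, hgap⟩ := hseg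
  have hnd := (gl.isPath n).support_nodup
  have hbuw : Before (gl.P n).support u w :=
    (by simp : List.Sublist [u, w] [u, w, u']).trans htriple
  have hbwu' : Before (gl.P n).support w u' :=
    (by simp : List.Sublist [w, u'] [u, w, u']).trans htriple
  have hout : gl.le v u ∨ gl.le u' v := by
    rcases gl.le_total u hu.1 v hv.1 with huv | hvu
    · rcases gl.le_total v hv.1 u' hu'.1 with hvu' | hu'v
      · rcases hgap v hv huv hvu' with rfl | rfl
        · exact Or.inl (gl.le_refl v hv.1)
        · exact Or.inr (gl.le_refl v hv.1)
      · exact Or.inr hu'v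
    · exact Or.inl hvu
  rcases hout with hvu | hu'v
  · have hbvw : Before (gl.P n).support v w := by
      rcases eq_or_ne v u with rfl | hne
      · exact hbuw
      · exact hnd.before_trans ((le_iff_before_of_mem_Llt hv hu hne).1 hvu) hbuw
    have hvw : gl.le v w := gl.le_trans v hv.1 u hu.1 w hw hvu huw
    exact ⟨fun hwv' => absurd (gl.le_antisymm w hw v hv.1 hwv' hvw) hwv,
      fun hbwv => absurd hbwv (hnd.not_before_of_before hbvw)⟩
  · have hbwv : Before (gl.P n).support w v := by
      rcases eq_or_ne u' v with rfl | hne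
      · exact hbwu'
      · exact hnd.before_trans hbwu' ((le_iff_before_of_mem_Llt hu' hv hne).1 hu'v)
    exact ⟨fun _ => hbwv, fun _ => gl.le_trans w hw u' hu'.1 v hv.1 hwu' hu'v⟩

variable (gl) in
def PrecedesBeyond (d : ℕ) (c v : V) : Prop :=
  ∀ n, d < n → c ∈ (gl.P n).support → Before (gl.P n).support c v

section PrecedesBeyond

variable (hws : gl.WellStructured) {v : V} (hv : v ∈ gl.L) {d : ℕ} (hvd : v ∈ (gl.P d).support)
include hws hv hvd

theorem precedesBeyond_of_le {a : V} (ha : a ∈ gl.L) (hav : gl.le a v) (hne : a ≠ v) :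
    gl.PrecedesBeyond d a v := fun _ hn han =>
  (le_iff_before hws ⟨hv, d, hn, hvd⟩ ha han hne).1 hav

theorem le_of_precedesBeyond {b : V} (hb : b ∈ gl.L) (hne : b ≠ v)
    (hbv : gl.PrecedesBeyond d b v) : gl.le b v := by
  obtain ⟨N, hN⟩ := (gl.gl1 b).1 hb
  have hdn : d < max (d + 1) N := by omega
  have hbn : b ∈ (gl.P (max (d + 1) N)).support := (hN _).2 (le_max_right _ _)
  exact (le_iff_before hws ⟨hv, d, hdn, hvd⟩ hb hbn hne).2 (hbv _ hdn hbn)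

theorem precedesBeyond_of_adj {c e : V} (hce : gl.union.Adj c e)
    (hdepth : d < gl.eDepth s(c, e)) (hev : e ≠ v) (hc : gl.PrecedesBeyond d c v) :
    gl.PrecedesBeyond d e v := by
  set m := gl.eDepth s(c, e)
  have hedge := gl.mem_edges_eDepth hce
  have hvm : v ∈ gl.Llt m := ⟨hv, d, hdepth, hvd⟩
  have hnd := (gl.isPath m).support_nodup
  have hem : e ∈ (gl.P m).support := (gl.P m).snd_mem_support_of_mem_edges hedge
  have hbev : Before (gl.P m).support e v := by
    rcases Walk.infix_support_iff_mem_edges.2 hedge with hinf | hinf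
    · exact hnd.before_of_infix hinf (hc m hdepth (hinf.subset (by simp))) hev
    · exact hnd.before_trans hinf.sublist (hc m hdepth (hinf.subset (by simp)))
  intro n hn hen
  by_cases heL : e ∈ gl.L
  · exact (le_iff_before hws ⟨hv, d, hn, hvd⟩ heL hen hev).1
      ((le_iff_before hws hvm heL hem hev).2 hbev)
  · obtain rfl : n = m := by_contra fun hnm => gl.gl2 m e hem heL n hnm hen
    exact hbev

theorem precedesBeyond_of_walk {c e : V} (p : gl.union.Walk c e) (hvp : v ∉ p.support)
    (hdepth : ∀ ed ∈ p.edges, d < gl.eDepth ed) (hc : gl.PrecedesBeyond d c v) :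
    gl.PrecedesBeyond d e v := by
  induction p with
  | nil => exact hc
  | cons hadj q ih =>
    rw [Walk.edges_cons, List.forall_mem_cons] at hdepth
    rw [Walk.support_cons, List.mem_cons, not_or] at hvp
    exact ih hvp.2 hdepth.2 (precedesBeyond_of_adj hws hv hvd hadj hdepth.1
      (ne_of_mem_of_not_mem q.start_mem_support hvp.2) hc)

end PrecedesBeyond

end GrainLine

theorem grainline_internal_vertex_separates_general {V : Type*} {G : SimpleGraph V} {x y : V}
    (gl : GrainLine G x y) (hws : gl.WellStructured)
    (v : V) (hv : v ∈ gl.L) (d : ℕ) (hd : d = gl.vDepth v) :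
    ∀ a b : V, a ∈ gl.L → gl.le a v → a ≠ v → b ∈ gl.L → gl.le v b → b ≠ v →
      ∀ W : gl.union.Walk a b, W.IsPath →
        v ∈ W.support ∨ ∃ e ∈ W.edges, gl.eDepth e ≤ d := by
  intro a b ha hav hanv hb hvb hbnv W _
  by_contra! hsep
  obtain ⟨hvW, hdepth⟩ := hsep
  have hvd : v ∈ (gl.P d).support := hd ▸ gl.mem_support_vDepth hv
  have ha' := GrainLine.precedesBeyond_of_le hws hv hvd ha hav hanv
  have hb' := GrainLine.precedesBeyond_of_walk hws hv hvd W hvW hdepth ha'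
  exact hbnv (gl.le_antisymm b hb v hv (GrainLine.le_of_precedesBeyond hws hv hvd hb hbnv hb') hvb)

/-- in a well-structured `x`–`y` grain line, an internal vertex
`v` of depth `d` together with the edges of depth at most `d` separates
`[x,v)_L` from `(v,y]_L` in `⋃𝒫`. -/
theorem grainline_internal_vertex_separates {V : Type*} {G : SimpleGraph V} {x y : V}
    (gl : GrainLine G x y) (hws : gl.WellStructured)
    (v : V) (hv : v ∈ gl.L) (hxv : gl.le x v) (hvx : v ≠ x)
    (hvy : gl.le v y) (hvy' : v ≠ y) (d : ℕ) (hd : d = gl.vDepth v) :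
    ∀ a b : V, a ∈ gl.L → gl.le a v → a ≠ v → b ∈ gl.L → gl.le v b → b ≠ v →
      ∀ W : gl.union.Walk a b, W.IsPath →
        v ∈ W.support ∨ ∃ e ∈ W.edges, gl.eDepth e ≤ d :=
  grainline_internal_vertex_separates_general gl hws v hv d hd
end

section
/- Let G be an infinitely edge-connected graph such that K^{ℵ₀} is not strongly immersed in G. Then there is a nested set of unitary compound-separations of G which is faithful to G. -/
open SimpleGraph

/-!
Fix a vertex `w` and call `X ⊆ V ∖ {w}` admissible if only finitely many edges leave `X` other than
those into `w`. The admissible sets form a Boolean algebra on `V ∖ {w}`, and the vertices that no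
admissible set separates form classes partitioning `V ∖ {w}`. If there were infinitely many classes,
splitting off one admissible piece at a time would give infinitely many disjoint nonempty
admissible sets; picking a branch vertex in each and greedily joining any two of them through `w`
by paths edge-disjoint from all earlier ones (possible by infinite edge-connectivity) would strongly
immerse `K^ℵ₀`. So there are finitely many classes, and each class `C` is admissible.

The petals `{C ∪ {w}, Cᶜ}` at all compound-cutvertices `w` form the required set. Petals at the
same `w` form a star because the classes are disjoint; every unitary compound-separation with
separator `w` is a union of classes, so it is refined by the petals; and petals at distinct vertices
are nested because in an infinitely edge-connected graph a set with finitely many outgoing edges is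
empty or everything.
-/

section SetFamilies

open Function

variable {α : Type*}

theorem exists_pairwise_disjoint_of_avoiding_finite (P : ℕ → Set α → Prop)
    (h : ∀ n F, F.Finite → ∃ E, E.Finite ∧ P n E ∧ Disjoint E F) :
    ∃ E : ℕ → Set α, (∀ n, P n (E n)) ∧ Pairwise (Disjoint on E) := by
  choose next hfin hP hdisj using h
  -- `used n` collects the sets chosen before stage `n`
  let used : ℕ → {F : Set α // F.Finite} := fun n =>
    Nat.rec ⟨∅, Set.finite_empty⟩ (fun n F => ⟨F.1 ∪ next n F.1 F.2, F.2.union (hfin ..)⟩) n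
  have hmono : Monotone fun n => (used n).1 :=
    monotone_nat_of_le_succ fun _ => Set.subset_union_left
  refine ⟨fun n => next n (used n).1 (used n).2, fun n => hP .., ?_⟩
  refine (pairwise_disjoint_on _).2 fun m n hmn => (hdisj n _ _).symm.mono_left ?_
  exact Set.subset_union_right.trans (hmono hmn)

theorem exists_pairwise_disjoint_of_separating {A : Set α → Prop} {U : Set α} (hU : A U)
    (hinter : ∀ X Y, A X → A Y → A (X ∩ Y)) (hdiff : ∀ X, A X → A (U \ X))
    {f : ℕ → α} (hfU : ∀ n, f n ∈ U)
    (hsep : Pairwise fun m n => ∃ X, A X ∧ f m ∈ X ∧ f n ∉ X) :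
    ∃ D : ℕ → Set α, (∀ k, A (D k) ∧ (D k).Nonempty) ∧ Pairwise (Disjoint on D) := by
  let State := {Z // A Z ∧ {i | f i ∈ Z}.Infinite}
  have step : ∀ Z : State, ∃ Z' : State, ∃ D, A D ∧ D.Nonempty ∧
      Z'.1 ⊆ Z.1 ∧ D ⊆ Z.1 ∧ Disjoint D Z'.1 := by
    rintro ⟨Z, hZ, hinf⟩
    have split : ∀ P Q, A P → A Q → Disjoint P Q → {i | f i ∈ Z ∩ P}.Infinite →
        (∃ i, f i ∈ Z ∩ Q) → ∃ Z' : State, ∃ D, A D ∧ D.Nonempty ∧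
          Z'.1 ⊆ Z ∧ D ⊆ Z ∧ Disjoint D Z'.1 := fun P Q hP hQ hPQ hinfP ⟨i, hi⟩ =>
      ⟨⟨Z ∩ P, hinter _ _ hZ hP, hinfP⟩, Z ∩ Q, hinter _ _ hZ hQ, ⟨f i, hi⟩,
        Set.inter_subset_left, Set.inter_subset_left,
        (hPQ.mono Set.inter_subset_right Set.inter_subset_right).symm⟩
    obtain ⟨m, hm, n, hn, hmn⟩ := hinf.nontrivial
    obtain ⟨X, hX, hmX, hnX⟩ := hsep hmn
    have hcover : {i | f i ∈ Z} ⊆ {i | f i ∈ Z ∩ X} ∪ {i | f i ∈ Z ∩ (U \ X)} := by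
      intro i hi
      by_cases hiX : f i ∈ X
      · exact Or.inl ⟨hi, hiX⟩
      · exact Or.inr ⟨hi, hfU i, hiX⟩
    rcases Set.infinite_union.1 (hinf.mono hcover) with h | h
    · exact split X (U \ X) hX (hdiff X hX) Set.disjoint_sdiff_right h ⟨n, hn, hfU n, hnX⟩
    · exact split (U \ X) X (hdiff X hX) hX Set.disjoint_sdiff_left h ⟨m, hm, hmX⟩
  choose next D hD hDne hsub hDsub hdisj using step
  let Z : ℕ → State := fun n =>
    Nat.rec ⟨U, hU, by simpa [hfU] using Set.infinite_univ⟩ (fun _ Z => next Z) n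
  have hanti : Antitone fun n => (Z n).1 := antitone_nat_of_succ_le fun n => hsub (Z n)
  refine ⟨fun k => D (Z k), fun k => ⟨hD _, hDne _⟩, (pairwise_disjoint_on _).2 fun m n hmn => ?_⟩
  exact (hdisj (Z m)).mono_right ((hDsub (Z n)).trans (hanti hmn))

end SetFamilies

section Graphs

open Function

variable {V : Type*} {G : SimpleGraph V}

theorem SimpleGraph.Walk.IsPath.support_subset_insert {S : Set V} {a w : V} {p : G.Walk a w}
    (hp : p.IsPath) (ha : a ∈ S) (hS : ∀ x y, s(x, y) ∈ p.edges → x ∈ S → y ∈ insert w S) :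
    ∀ x ∈ p.support, x ∈ insert w S := by
  induction p with
  | nil => simp [ha]
  | @cons a c w hac q ih =>
    rw [Walk.cons_isPath_iff] at hp
    have hc := hS a c (by simp) ha
    simp only [Walk.support_cons, List.mem_cons, forall_eq_or_imp]
    refine ⟨Or.inr ha, ?_⟩
    rcases hc with rfl | hc
    · obtain rfl := (Walk.isPath_iff_nil.1 hp.1).eq_nil
      simp
    · exact ih hp.1 hc fun x y hxy => hS x y (by simp [hxy])

namespace InfEdgeConn

theorem exists_path_avoiding (hG : InfEdgeConn G) {u v : V} (huv : u ≠ v) {F : Set (Sym2 V)}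
    (hF : F.Finite) : ∃ p : G.Walk u v, p.IsPath ∧ ∀ e ∈ p.edges, e ∉ F := by
  obtain ⟨P, hP, hdisj⟩ := hG.2 u v huv
  by_contra! hmeet
  -- each of the pairwise edge-disjoint paths `P n` uses its own edge of `F`
  choose e he heF using fun n => hmeet (P n) (hP n)
  have he_inj : Function.Injective e := fun m n hmn => by
    by_contra hne
    exact hdisj m n hne (e m) (he m) (hmn ▸ he n)
  exact Set.infinite_range_of_injective he_inj (hF.subset (Set.range_subset_iff.2 heF))

theorem eq_empty_of_finite_boundary (hG : InfEdgeConn G) {Z : Set V}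
    (hZ : {p : V × V | G.Adj p.1 p.2 ∧ p.1 ∈ Z ∧ p.2 ∉ Z}.Finite) (hc : Zᶜ.Nonempty) :
    Z = ∅ := by
  by_contra hne
  obtain ⟨u, hu⟩ := Set.nonempty_iff_ne_empty.2 hne
  obtain ⟨v, hv⟩ := hc
  obtain ⟨p, -, hp⟩ :=
    hG.exists_path_avoiding (ne_of_mem_of_not_mem hu hv) (hZ.image fun p => s(p.1, p.2))
  obtain ⟨d, hd, hdu, hdv⟩ := p.exists_boundary_dart Z hu hv
  exact hp d.edge (List.mem_map_of_mem hd) ⟨d.toProd, ⟨d.adj, hdu, hdv⟩, rfl⟩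

end InfEdgeConn

/-- The sides `X` of the unitary compound-separations `{insert w X, Xᶜ}` with separator `w`,
without the requirement that both sides be proper. -/
def Admissible (G : SimpleGraph V) (w : V) (X : Set V) : Prop :=
  w ∉ X ∧ {p : V × V | G.Adj p.1 p.2 ∧ p.1 ∈ X ∧ p.2 ∉ insert w X}.Finite

theorem admissible_compl_singleton (G : SimpleGraph V) (w : V) : Admissible G w {w}ᶜ :=
  ⟨by simp, Set.finite_empty.subset fun p ⟨_, hp1, hp2⟩ => by simp_all⟩

namespace Admissible

variable {w : V} {X Y : Set V}

theorem inter (hX : Admissible G w X) (hY : Admissible G w Y) : Admissible G w (X ∩ Y) := by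
  refine ⟨fun h => hX.1 h.1, (hX.2.union hY.2).subset ?_⟩
  rintro ⟨a, b⟩ ⟨hab, ⟨haX, haY⟩, hb⟩
  simp only [Set.mem_insert_iff, Set.mem_inter_iff, not_or, not_and] at hb
  by_cases hbX : b ∈ X
  · exact Or.inr ⟨hab, haY, by simp [hb.1, hb.2 hbX]⟩
  · exact Or.inl ⟨hab, haX, by simp [hb.1, hbX]⟩

theorem compl_insert (hX : Admissible G w X) : Admissible G w (insert w X)ᶜ := by
  refine ⟨by simp, (hX.2.image Prod.swap).subset ?_⟩
  rintro ⟨a, b⟩ ⟨hab, ha, hb⟩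
  have hbX : b ∈ X := by simp only [Set.mem_insert_iff, Set.mem_compl_iff] at hb; tauto
  exact ⟨(b, a), ⟨hab.symm, hbX, by simpa using ha⟩, rfl⟩

theorem diff_compl_singleton (hX : Admissible G w X) : Admissible G w ({w}ᶜ \ X) := by
  convert hX.compl_insert using 1
  ext; simp

end Admissible

namespace InfEdgeConn

variable {w : V} {X Y : Set V}

theorem exists_walk_to_center (hG : InfEdgeConn G) (hX : Admissible G w X) {v : V} (hv : v ∈ X)
    {F : Set (Sym2 V)} (hF : F.Finite) :
    ∃ p : G.Walk v w, (∀ x ∈ p.support, x ∈ insert w X) ∧ ∀ e ∈ p.edges, e ∉ F := by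
  obtain ⟨p, hp, hpF⟩ := hG.exists_path_avoiding (ne_of_mem_of_not_mem hv hX.1)
    (hF.union (hX.2.image fun p => s(p.1, p.2)))
  refine ⟨p, hp.support_subset_insert hv fun x y hxy hx => ?_, fun e he heF => hpF e he (.inl heF)⟩
  by_contra hy
  exact hpF _ hxy (.inr ⟨(x, y), ⟨p.adj_of_mem_edges hxy, hx, hy⟩, rfl⟩)

theorem exists_path_through_center (hG : InfEdgeConn G) (hX : Admissible G w X)
    (hY : Admissible G w Y) {u v : V} (hu : u ∈ X) (hv : v ∈ Y) {F : Set (Sym2 V)}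
    (hF : F.Finite) : ∃ p : G.Walk u v, p.IsPath ∧ (∀ x ∈ p.support, x ∈ insert w (X ∪ Y)) ∧
      ∀ e ∈ p.edges, e ∉ F := by
  classical
  obtain ⟨p, hpX, hpF⟩ := hG.exists_walk_to_center hX hu hF
  obtain ⟨q, hqY, hqF⟩ := hG.exists_walk_to_center hY hv hF
  refine ⟨(p.append q.reverse).bypass, Walk.bypass_isPath _, fun x hx => ?_, fun e he => ?_⟩
  · rcases (Walk.mem_support_append_iff _ _).1 (Walk.support_bypass_subset_support _ hx)
      with hx | hx
    · exact Set.insert_subset_insert Set.subset_union_left (hpX x hx)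
    · exact Set.insert_subset_insert Set.subset_union_right (hqY x (by simpa using hx))
  · rcases List.mem_append.1 (Walk.edges_append _ _ ▸ Walk.edges_bypass_subset_edges _ he)
      with he | he
    · exact hpF e he
    · exact hqF e (by simpa using he)

theorem stronglyImmersed_top_of_disjoint_admissible (hG : InfEdgeConn G) {D : ℕ → Set V}
    (hD : ∀ k, Admissible G w (D k) ∧ (D k).Nonempty) (hdisj : Pairwise (Disjoint on D)) :
    StronglyImmersed (⊤ : SimpleGraph ℕ) G := by
  choose α hα using fun k => (hD k).2
  have hα_eq {z k : ℕ} (h : α z ∈ D k) : z = k := by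
    by_contra hne
    exact Set.disjoint_left.1 (hdisj hne) (hα z) h
  obtain ⟨E, hE, hEdisj⟩ := exists_pairwise_disjoint_of_avoiding_finite
    (fun n E => ∃ p : G.Walk (α n.unpair.1) (α n.unpair.2), p.IsPath ∧
      (∀ x ∈ p.support, x ∈ insert w (D n.unpair.1 ∪ D n.unpair.2)) ∧ ∀ e ∈ p.edges, e ∈ E)
    fun n F hF => by
      obtain ⟨p, hp, hpD, hpF⟩ := hG.exists_path_through_center (hD _).1 (hD _).1 (hα _) (hα _) hF
      exact ⟨{e | e ∈ p.edges}, p.edges.finite_toSet, ⟨p, hp, hpD, fun e he => he⟩,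
        Set.disjoint_left.2 hpF⟩
  choose Q hQ hQD hQE using hE
  refine ⟨α, fun u v _ => (Q (Nat.pair u v)).copy (by simp) (by simp), ?_, ?_, ?_, ?_⟩
  · exact fun k l h => hα_eq (h ▸ hα l)
  · intro u v _
    simpa using hQ _
  · intro u v u' v' _ _ hne e he he'
    have hpair : Nat.pair u v ≠ Nat.pair u' v' := fun h => hne (by
      obtain ⟨rfl, rfl⟩ := Nat.pair_eq_pair.1 h
      rfl)
    simp only [Walk.edges_copy] at he he'
    exact Set.disjoint_left.1 (hEdisj hpair) (hQE _ e he) (hQE _ e he')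
  · rintro u v _ x hx ⟨z, rfl⟩
    have hxD := hQD _ _ (by simpa using hx)
    simp only [Nat.unpair_pair, Set.mem_insert_iff, Set.mem_union] at hxD
    rcases hxD with hw | hu | hv
    · exact absurd (hw ▸ hα z) (hD z).1.1
    · exact .inl (congrArg α (hα_eq hu))
    · exact .inr (congrArg α (hα_eq hv))

theorem disjoint_of_admissible (hG : InfEdgeConn G) {w' : V} (hX : Admissible G w X)
    (hY : Admissible G w' Y) (hne : w ≠ w') (hwY : w ∉ Y) (hw'X : w' ∉ X) : Disjoint X Y := by
  refine Set.disjoint_iff_inter_eq_empty.2 (hG.eq_empty_of_finite_boundary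
    ((hX.2.union hY.2).subset ?_) ⟨w, fun h => hX.1 h.1⟩)
  rintro ⟨a, b⟩ ⟨hab, ⟨haX, haY⟩, hb⟩
  by_cases hbX : b ∈ X
  · exact .inr ⟨hab, haY, by rintro (rfl | hbY) <;> simp_all⟩
  · by_cases hbw : b = w
    · exact .inr ⟨hab, haY, by rintro (rfl | hbY) <;> simp_all⟩
    · exact .inl ⟨hab, haX, by rintro (rfl | hbX') <;> simp_all⟩

end InfEdgeConn

/-- For `u ≠ w` these classes partition `V ∖ {w}`; `classAt G w w = {w}ᶜ` is not one of them. -/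
def classAt (G : SimpleGraph V) (w u : V) : Set V :=
  {v | v ≠ w ∧ ∀ X, Admissible G w X → u ∈ X → v ∈ X}

section classAt

variable {w u v : V} {X : Set V}

theorem classAt_subset (hX : Admissible G w X) (hu : u ∈ X) : classAt G w u ⊆ X :=
  fun _ hv => hv.2 X hX hu

theorem center_notMem_classAt : w ∉ classAt G w u := fun h => h.1 rfl

theorem mem_classAt_self (hu : u ≠ w) : u ∈ classAt G w u := ⟨hu, fun _ _ h => h⟩

theorem exists_admissible_of_notMem_classAt (hv : v ≠ w) (h : v ∉ classAt G w u) :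
    ∃ X, Admissible G w X ∧ u ∈ X ∧ v ∉ X := by
  simpa [classAt, hv] using h

theorem classAt_subset_of_mem (hv : v ∈ classAt G w u) : classAt G w v ⊆ classAt G w u :=
  fun _ hz => ⟨hz.1, fun X hX hu => hz.2 X hX (hv.2 X hX hu)⟩

theorem mem_classAt_comm (hu : u ≠ w) (hv : v ∈ classAt G w u) : u ∈ classAt G w v := by
  refine ⟨hu, fun X hX hvX => by_contra fun huX => ?_⟩
  have := hv.2 _ hX.compl_insert (by simp [hu, huX])
  exact this (Set.mem_insert_of_mem w hvX)

theorem classAt_eq_of_mem (hu : u ≠ w) (hv : v ∈ classAt G w u) :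
    classAt G w v = classAt G w u :=
  (classAt_subset_of_mem hv).antisymm (classAt_subset_of_mem (mem_classAt_comm hu hv))

theorem classAt_eq_or_disjoint (hu : u ≠ w) (hv : v ≠ w) :
    classAt G w u = classAt G w v ∨ Disjoint (classAt G w u) (classAt G w v) := by
  refine or_iff_not_imp_right.2 fun h => ?_
  obtain ⟨z, hzu, hzv⟩ := Set.not_disjoint_iff.1 h
  rw [← classAt_eq_of_mem hu hzu, classAt_eq_of_mem hv hzv]

theorem finite_classAt_image (hG : InfEdgeConn G)
    (him : ¬ StronglyImmersed (⊤ : SimpleGraph ℕ) G) : (classAt G w '' {w}ᶜ).Finite := by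
  by_contra hinf
  let C := Set.Infinite.natEmbedding _ hinf
  choose f hfw hf using fun n => (C n).2
  have hsep : Pairwise fun m n => ∃ X, Admissible G w X ∧ f m ∈ X ∧ f n ∉ X := by
    intro m n hmn
    refine exists_admissible_of_notMem_classAt (hfw n) fun hmem => hmn (C.injective ?_)
    exact Subtype.ext ((hf m).symm.trans ((classAt_eq_of_mem (hfw m) hmem).symm.trans (hf n)))
  obtain ⟨D, hD, hdisj⟩ := exists_pairwise_disjoint_of_separating
    (admissible_compl_singleton G w) (fun _ _ => .inter) (fun _ => .diff_compl_singleton) hfw hsep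
  exact him (hG.stronglyImmersed_top_of_disjoint_admissible hD hdisj)

theorem admissible_classAt (hfin : (classAt G w '' {w}ᶜ).Finite) (hu : u ≠ w) :
    Admissible G w (classAt G w u) := by
  have hpiece : ∀ C ∈ classAt G w '' {w}ᶜ, {p : V × V | G.Adj p.1 p.2 ∧
      p.1 ∈ classAt G w u ∧ p.2 ∈ C \ classAt G w u}.Finite := by
    rintro _ ⟨v, hv, rfl⟩
    by_cases hvu : v ∈ classAt G w u
    · simp [classAt_eq_of_mem hu hvu]
    · obtain ⟨X, hX, huX, hvX⟩ := exists_admissible_of_notMem_classAt hv hvu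
      refine hX.2.subset fun p ⟨hp, hp1, hp2, _⟩ => ⟨hp, classAt_subset hX huX hp1, ?_⟩
      exact classAt_subset hX.compl_insert (by simpa [hvX] using hv) hp2
  refine ⟨center_notMem_classAt, (hfin.biUnion hpiece).subset ?_⟩
  rintro ⟨a, b⟩ ⟨hab, ha, hb⟩
  simp only [Set.mem_insert_iff, not_or] at hb
  exact Set.mem_biUnion ⟨b, hb.1, rfl⟩ ⟨hab, ha, mem_classAt_self hb.1, hb.2⟩

end classAt

namespace IsUnitaryCSep

variable {A B : Set V} {w u v : V}

theorem center_mem (hU : IsUnitaryCSep G A B w) : w ∈ A ∩ B := hU.2 ▸ rfl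

theorem admissible_diff (hU : IsUnitaryCSep G A B w) : Admissible G w (A \ B) := by
  refine ⟨fun h => h.2 hU.center_mem.2, hU.1.2.2.2.2.subset ?_⟩
  rintro ⟨a, b⟩ ⟨hab, ha, hb⟩
  have hcover := Set.ext_iff.1 hU.1.1 b
  have hsep := Set.ext_iff.1 hU.2 b
  simp only [Set.mem_insert_iff, Set.mem_sdiff, Set.mem_union, Set.mem_inter_iff,
    Set.mem_univ, Set.mem_singleton_iff, not_or, not_and, not_not] at hb hcover hsep
  exact ⟨hab, ha, by tauto, by tauto⟩

theorem notMem_classAt (hU : IsUnitaryCSep G A B w) (h : SepPair A B u v) :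
    u ≠ w ∧ v ≠ w ∧ v ∉ classAt G w u := by
  have hw := hU.center_mem
  obtain ⟨X, hX, huX, hvX⟩ : ∃ X, Admissible G w X ∧ u ∈ X ∧ v ∉ insert w X := by
    rcases h with ⟨hu, hv⟩ | ⟨hu, hv⟩
    · exact ⟨A \ B, hU.admissible_diff, hu, by grind⟩
    · exact ⟨_, hU.admissible_diff.compl_insert, by grind, by grind⟩
  rw [Set.mem_insert_iff, not_or] at hvX
  exact ⟨ne_of_mem_of_not_mem huX hX.1, hvX.1, fun h => hvX.2 (classAt_subset hX huX h)⟩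

end IsUnitaryCSep

theorem IsCompoundCutvertex.exists_notMem_classAt {w u : V} (hw : IsCompoundCutvertex G w)
    (hu : u ≠ w) : ∃ v, v ≠ w ∧ v ∉ classAt G w u := by
  obtain ⟨A, B, hU⟩ := hw
  obtain ⟨a, ha⟩ := hU.1.2.1
  obtain ⟨b, hb⟩ := hU.1.2.2.1
  obtain ⟨haw, hbw, hba⟩ := hU.notMem_classAt (.inl ⟨ha, hb⟩)
  by_cases hau : a ∈ classAt G w u
  · exact ⟨b, hbw, by rwa [← classAt_eq_of_mem hu hau]⟩
  · exact ⟨a, haw, hau⟩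

def petal (w : V) (X : Set V) : Set V × Set V := (insert w X, Xᶜ)

section petal

variable {w w' : V} {X Y : Set V}

theorem petal_inter (hw : w ∉ X) : (petal w X).1 ∩ (petal w X).2 = {w} := by
  ext x
  by_cases hx : x = w <;> simp_all [petal]

theorem Admissible.isUnitaryCSep_petal (hX : Admissible G w X) (hne : X.Nonempty)
    (hne' : (insert w X)ᶜ.Nonempty) : IsUnitaryCSep G (petal w X).1 (petal w X).2 w := by
  have h1 : (petal w X).1 \ (petal w X).2 = X := by ext; simp [petal]
  have h2 : (petal w X).2 \ (petal w X).1 = (insert w X)ᶜ := by ext; simp [petal]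
  refine ⟨⟨?_, by rwa [h1], by rwa [h2], ?_, ?_⟩, petal_inter hX.1⟩
  · ext x
    simp only [petal, Set.mem_union, Set.mem_insert_iff, Set.mem_compl_iff, Set.mem_univ]
    tauto
  · rw [petal_inter hX.1]
    exact Set.finite_singleton w
  · simpa only [h1, h2, Set.mem_compl_iff] using hX.2

theorem petal_le_swapSep_petal (hXY : Disjoint X Y) (hwY : w ∉ Y) (hw'X : w' ∉ X) :
    osLE (petal w X) (swapSep (petal w' Y)) :=
  ⟨Set.insert_subset hwY (Set.subset_compl_iff_disjoint_right.2 hXY),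
    Set.insert_subset hw'X (Set.subset_compl_iff_disjoint_right.2 hXY.symm)⟩

theorem not_petal_le_swapSep_petal (hX : X.Nonempty) :
    ¬ osLE (petal w X) (swapSep (petal w X)) := fun h =>
  hX.elim fun _ hx => h.1 (Set.mem_insert_of_mem w hx) hx

theorem InfEdgeConn.nestedSep_petal (hG : InfEdgeConn G) (hX : Admissible G w X)
    (hY : Admissible G w' Y) (hne : w ≠ w') : NestedSep (petal w X) (petal w' Y) := by
  by_cases hwY : w ∈ Y <;> by_cases hw'X : w' ∈ X
  · have h := Set.disjoint_left.1 <| hG.disjoint_of_admissible hX.compl_insert hY.compl_insert hne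
      (by simp [hwY]) (by simp [hw'X])
    refine .inr (.inr (.inr ⟨fun x hx => ?_, fun x hx => ?_⟩)) <;>
      simp only [swapSep, petal, Set.mem_compl_iff, Set.mem_insert_iff] at h hx ⊢ <;> grind
  · have h := Set.disjoint_left.1 <|
      hG.disjoint_of_admissible hX hY.compl_insert hne (by simp [hwY]) hw'X
    refine .inl ⟨fun x hx => ?_, fun x hx => ?_⟩ <;>
      simp only [petal, Set.mem_compl_iff, Set.mem_insert_iff] at h hx ⊢ <;> grind
  · have h := Set.disjoint_left.1 <|
      hG.disjoint_of_admissible hY hX.compl_insert hne.symm (by simp [hw'X]) hwY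
    refine .inr (.inl ⟨fun x hx => ?_, fun x hx => ?_⟩) <;>
      simp only [petal, Set.mem_compl_iff, Set.mem_insert_iff] at h hx ⊢ <;> grind
  · exact .inr (.inr (.inl (petal_le_swapSep_petal
      (hG.disjoint_of_admissible hX hY hne hwY hw'X) hwY hw'X)))

end petal

theorem exists_isStarOrientation {N : Set (Set V × Set V)}
    (hle : ∀ s ∈ N, ∀ t ∈ N, s ≠ t → osLE s (swapSep t))
    (hirr : ∀ s ∈ N, ¬ osLE s (swapSep s)) : ∃ σ, IsStarOrientation N σ := by
  by_cases hpair : ∃ s ∈ N, swapSep s ∈ N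
  · obtain ⟨s, hs, hs'⟩ := hpair
    -- a third member `t` would satisfy `t ≤ s` and `t ≤ swapSep s`, hence `t ≤ swapSep t`
    have hN : ∀ t ∈ N, t = s ∨ t = swapSep s := by
      intro t ht
      by_contra! hne
      exact hirr t ht ⟨(hle t ht s hs hne.1).1.trans (hle t ht _ hs' hne.2).2,
        (hle t ht s hs hne.1).1.trans (hle t ht _ hs' hne.2).2⟩
    have hss : swapSep s ≠ s := fun h => hirr s hs (by rw [h]; exact ⟨subset_rfl, subset_rfl⟩)
    refine ⟨{s}, fun t ht => ?_, fun t _ ⟨h, h'⟩ => hss ?_, fun t ht => ?_, fun t ht t' ht' h => ?_⟩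
    · rcases hN t ht with rfl | rfl
      exacts [.inl rfl, .inr rfl]
    · rw [Set.mem_singleton_iff] at h h'
      rwa [h] at h'
    · exact .inl ((Set.mem_singleton_iff.1 ht).symm ▸ hs)
    · exact absurd (ht.trans ht'.symm) h
  · push Not at hpair
    exact ⟨N, fun t ht => .inl ht, fun t ht h => hpair t ht h.2, fun t ht => .inl ht, hle⟩

def petalsAt (G : SimpleGraph V) (w : V) : Set (Set V × Set V) :=
  {s | ∃ u, u ≠ w ∧ s = petal w (classAt G w u)}

section petalsAt

variable {w w' : V} {s t : Set V × Set V}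

theorem inter_eq_of_mem_petalsAt (hs : s ∈ petalsAt G w) : s.1 ∩ s.2 = {w} := by
  obtain ⟨u, -, rfl⟩ := hs
  exact petal_inter center_notMem_classAt

theorem exists_isStarOrientation_petalsAt : ∃ σ, IsStarOrientation (petalsAt G w) σ := by
  refine exists_isStarOrientation ?_ ?_
  · rintro _ ⟨u, hu, rfl⟩ _ ⟨v, hv, rfl⟩ hne
    rcases classAt_eq_or_disjoint hu hv with h | h
    · exact absurd (by rw [h]) hne
    · exact petal_le_swapSep_petal h center_notMem_classAt center_notMem_classAt
  · rintro _ ⟨u, hu, rfl⟩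
    exact not_petal_le_swapSep_petal ⟨u, mem_classAt_self hu⟩

theorem nestedSep_of_mem_petalsAt (hG : InfEdgeConn G)
    (him : ¬ StronglyImmersed (⊤ : SimpleGraph ℕ) G) (hs : s ∈ petalsAt G w)
    (ht : t ∈ petalsAt G w') : NestedSep s t := by
  obtain ⟨u, hu, rfl⟩ := hs
  obtain ⟨u', hu', rfl⟩ := ht
  by_cases hw : w = w'
  · subst hw
    rcases classAt_eq_or_disjoint hu hu' with h | h
    · exact .inl (h ▸ ⟨subset_rfl, subset_rfl⟩)
    · exact .inr (.inr (.inl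
        (petal_le_swapSep_petal h center_notMem_classAt center_notMem_classAt)))
  · exact hG.nestedSep_petal (admissible_classAt (finite_classAt_image hG him) hu)
      (admissible_classAt (finite_classAt_image hG him) hu') hw

theorem IsCompoundCutvertex.isUnitaryCSep_of_mem_petalsAt (hG : InfEdgeConn G)
    (him : ¬ StronglyImmersed (⊤ : SimpleGraph ℕ) G) (hw : IsCompoundCutvertex G w)
    (hs : s ∈ petalsAt G w) : IsUnitaryCSep G s.1 s.2 w := by
  obtain ⟨u, hu, rfl⟩ := hs
  obtain ⟨v, hvw, hvu⟩ := hw.exists_notMem_classAt hu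
  exact (admissible_classAt (finite_classAt_image hG him) hu).isUnitaryCSep_petal
    ⟨u, mem_classAt_self hu⟩ ⟨v, by simp [hvw, hvu]⟩

theorem IsUnitaryCSep.exists_mem_petalsAt {A B : Set V} {u v : V} (hU : IsUnitaryCSep G A B w)
    (h : SepPair A B u v) : ∃ s ∈ petalsAt G w, SepPair s.1 s.2 u v := by
  obtain ⟨hu, hv, hvu⟩ := hU.notMem_classAt h
  refine ⟨_, ⟨u, hu, rfl⟩, .inl ⟨⟨?_, ?_⟩, ?_, ?_⟩⟩ <;> simp [petal, mem_classAt_self hu, hv, hvu]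

end petalsAt

end Graphs

/-- an infinitely edge-connected graph with no strongly immersed
`K^{ℵ₀}` has a nested set of unitary compound-separations faithful to it. -/
theorem exists_faithful_nested_set {V : Type*} (G : SimpleGraph V)
    (hG : InfEdgeConn G) (him : ¬ StronglyImmersed (⊤ : SimpleGraph ℕ) G) :
    ∃ N : Set (Set V × Set V),
      (∀ s ∈ N, ∃ w, IsUnitaryCSep G s.1 s.2 w) ∧
      (∀ s ∈ N, ∀ t ∈ N, NestedSep s t) ∧
      FaithfulSet G N := by
  set N := {s | ∃ w, IsCompoundCutvertex G w ∧ s ∈ petalsAt G w}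
  refine ⟨N, ?_, ?_, fun w hw => ⟨?_, ?_⟩⟩
  · rintro s ⟨w, hw, hs⟩
    exact ⟨w, hw.isUnitaryCSep_of_mem_petalsAt hG him hs⟩
  · rintro s ⟨w, -, hs⟩ t ⟨w', -, ht⟩
    exact nestedSep_of_mem_petalsAt hG him hs ht
  · have hN : {s ∈ N | s.1 ∩ s.2 = {w}} = petalsAt G w := by
      refine Set.ext fun s => ⟨fun ⟨⟨w', _, hs⟩, hsw⟩ => ?_, fun hs =>
        ⟨⟨w, hw, hs⟩, inter_eq_of_mem_petalsAt hs⟩⟩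
      rwa [← Set.singleton_eq_singleton_iff.1 ((inter_eq_of_mem_petalsAt hs).symm.trans hsw)]
    exact hN ▸ exists_isStarOrientation_petalsAt
  · rintro u v ⟨A, B, hU, huv⟩
    obtain ⟨s, hs, hsep⟩ := hU.exists_mem_petalsAt huv
    exact ⟨s, ⟨w, hw, hs⟩, inter_eq_of_mem_petalsAt hs, hsep⟩
end
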